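/- For a linear code C ⊆ F_2^n, let W_C be uniformly distributed on C. Then for every x ∈ F_2^n, E[(-1)^{x·W_C}] = 1 if x ∈ C^⊥ and E[(-1)^{x·W_C}] = 0 if x ∉ C^⊥. Consequently, if {C_r} is an ε-almost dual universal_2 code family with minimum dimension n - m, i.e., its duals C_r^⊥ have maximum dimension m and satisfy Pr_r[x ∈ C_r^⊥] ≤ 2^{-m}·ε for all nonzero x, then the family {W_{C_r}} is √(ε·2^{-m})-biased: E_r[(E_{W_{C_r}}[(-1)^{x·W_{C_r}}])²] ≤ ε·2^{-m} for all nonzero x. -/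

import Mathlib

open scoped Classical

def dualSet {n : ℕ} (C : Set (Fin n → ZMod 2)) : Set (Fin n → ZMod 2) :=
  {y | ∀ x ∈ C, (∑ i, x i * y i) = 0}

noncomputable def bias {n : ℕ} (C : Submodule (ZMod 2) (Fin n → ZMod 2))
    (x : Fin n → ZMod 2) : ℝ :=
  (1 / (Nat.card C : ℝ)) * ∑ w : C,
    (if (∑ i, x i * (w : Fin n → ZMod 2) i) = 0 then (1 : ℝ) else -1)

lemma bias_of_mem {n : ℕ} (D : Submodule (ZMod 2) (Fin n → ZMod 2)) (x : Fin n → ZMod 2)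
    (hx : x ∈ dualSet (D : Set (Fin n → ZMod 2))) : bias D x = 1 := by
  unfold bias
  have hc : ∀ w : D, (∑ i, x i * (w : Fin n → ZMod 2) i) = 0 := by
    intro w
    have := hx _ w.2
    rw [← this]
    exact Finset.sum_congr rfl (fun i _ => mul_comm _ _)
  rw [Finset.sum_congr rfl (fun w _ => if_pos (hc w)), Finset.sum_const,
    Finset.card_univ, Nat.card_eq_fintype_card]
  have : (Fintype.card D : ℝ) ≠ 0 := Nat.cast_ne_zero.mpr Fintype.card_ne_zero
  field_simp
  rw [nsmul_eq_mul, mul_one]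

lemma bias_of_not_mem {n : ℕ} (D : Submodule (ZMod 2) (Fin n → ZMod 2)) (x : Fin n → ZMod 2)
    (hx : x ∉ dualSet (D : Set (Fin n → ZMod 2))) : bias D x = 0 := by
  unfold bias
  obtain ⟨w₀, hw₀D, hw₀'⟩ : ∃ w ∈ D, (∑ i, w i * x i) ≠ 0 := by
    simpa [dualSet] using hx
  have hw₀ : (∑ i, x i * w₀ i) ≠ 0 := fun hc => hw₀' (by
    rw [← hc]; exact Finset.sum_congr rfl (fun i _ => mul_comm _ _))
  set g : D → ℝ := fun w => if (∑ i, x i * (w : Fin n → ZMod 2) i) = 0 then (1 : ℝ) else -1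
  have hone : ∀ a : ZMod 2, a ≠ 0 → a = 1 := by decide
  set W₀ : D := ⟨w₀, hw₀D⟩
  have key : ∀ w : D, g (w + W₀) = - g w := by
    intro w
    have hadd : (∑ i, x i * ((w + W₀ : D) : Fin n → ZMod 2) i)
        = (∑ i, x i * (w : Fin n → ZMod 2) i) + 1 := by
      rw [← hone _ hw₀, ← Finset.sum_add_distrib]
      exact Finset.sum_congr rfl (fun i _ => by simp [mul_add]; exact Or.inl rfl)
    by_cases h : (∑ i, x i * (w : Fin n → ZMod 2) i) = 0
    · have : (∑ i, x i * ((w + W₀ : D) : Fin n → ZMod 2) i) ≠ 0 := by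
        rw [hadd, h]; decide
      simp only [g]
      rw [if_neg this, if_pos h]
    · have h1 := hone _ h
      have : (∑ i, x i * ((w + W₀ : D) : Fin n → ZMod 2) i) = 0 := by
        rw [hadd, h1]; decide
      simp only [g]
      rw [if_pos this, if_neg h]
      norm_num
  have hS : (∑ w : D, g w) = - ∑ w : D, g w := by
    calc (∑ w : D, g w) = ∑ w : D, g (Equiv.addRight W₀ w) :=
          (Equiv.sum_comp (Equiv.addRight W₀) g).symm
      _ = ∑ w : D, - g w := Finset.sum_congr rfl (fun w _ => key w)
      _ = - ∑ w : D, g w := by rw [Finset.sum_neg_distrib]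
  have : (∑ w : D, g w) = 0 := by linarith
  rw [this, mul_zero]

/-- `E[(-1)^{x·W_C}]` equals `1` if `x ∈ C^⊥` and `0` otherwise; hence an
`ε`-almost dual universal₂ family `{C_r}` with minimum dimension `n-m` (whose duals satisfy
`Pr_r[x ∈ C_r^⊥] ≤ 2^{-m}·ε`) yields a `√(ε·2^{-m})`-biased family of uniform code
distributions. -/
theorem stmt18 {n m : ℕ} {I : Type*} [Fintype I] [Nonempty I]
    (C : I → Submodule (ZMod 2) (Fin n → ZMod 2)) (ε : ℝ)
    (hdim : ∀ r, n - m ≤ Module.finrank (ZMod 2) (C r))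
    (hdual : ∀ x : Fin n → ZMod 2, x ≠ 0 →
      ((Finset.univ.filter (fun r => x ∈ dualSet (C r : Set (Fin n → ZMod 2)))).card : ℝ) /
          (Fintype.card I : ℝ) ≤ ε / 2 ^ m) :
    (∀ (D : Submodule (ZMod 2) (Fin n → ZMod 2)) (x : Fin n → ZMod 2),
      (x ∈ dualSet (D : Set (Fin n → ZMod 2)) → bias D x = 1) ∧
      (x ∉ dualSet (D : Set (Fin n → ZMod 2)) → bias D x = 0)) ∧
    (∀ x : Fin n → ZMod 2, x ≠ 0 →
      (∑ r : I, (bias (C r) x) ^ 2) / (Fintype.card I : ℝ) ≤ ε * ((1 : ℝ) / 2 ^ m)) := by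
  refine ⟨fun D x => ⟨bias_of_mem D x, bias_of_not_mem D x⟩, fun x hx => ?_⟩
  have hsum : (∑ r : I, (bias (C r) x) ^ 2)
      = ((Finset.univ.filter (fun r => x ∈ dualSet (C r : Set (Fin n → ZMod 2)))).card : ℝ) := by
    rw [Finset.card_filter, Nat.cast_sum]
    refine Finset.sum_congr rfl (fun r _ => ?_)
    by_cases h : x ∈ dualSet (C r : Set (Fin n → ZMod 2))
    · simp [bias_of_mem _ _ h, h]
    · simp [bias_of_not_mem _ _ h, h]
  rw [hsum, mul_one_div]
  exact hdual x hx
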